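/- (Reduction of the general Lax pair of the Toda hierarchy.) Let r ≥ 1 be a natural number, c_0 ∈ ℝ, I ⊆ ℝ an open interval, σ : I → ℝ twice differentiable with σ'(t) > 0 and σ''(t) = -(r+1) c_0 σ'(t)^2 on I, ν : ℤ → ℝ arbitrary, η(n,t) = ν(n) + σ(t), and H, G : ℝ → ℝ. Let 𝒫_j, 𝒬_j : ℤ × I → ℝ be the sequences obtained by applying the Toda-hierarchy recursion to (Ĥ, Ĝ), where Ĥ(n,t) = H(η(n,t)), Ĝ(n,t) = G(η(n,t)), and define the reduced polynomials P̂_r(z; n, t) = Σ_{j=0}^{r} z^j 𝒫_{r-j}(n,t) and Q̂_r(z; n, t) = z^{r+1} + Σ_{j=0}^{r} z^j 𝒬_{r-j}(n,t) - 𝒫_{r+1}(n,t). Fix λ ∈ ℝ, set ζ(t) = λ / σ'(t)^{1/(r+1)}, u(n,t) = σ'(t)^{1/(r+1)} H(η(n,t)), v(n,t) = σ'(t)^{1/(r+1)} G(η(n,t)), and let p_j, q_j be the recursion sequences of (u, v) with P_r, Q_r the corresponding polynomials in λ. Let φ : ℝ × ℝ → ℝ be differentiable in both arguments and suppose that for all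 n ∈ ℤ, t ∈ I, writing η = η(n,t), η̄ = η(n+1,t), η̲ = η(n-1,t), z = ζ(t): z φ(η,z) = H(η) φ(η̄,z) + H(η̲) φ(η̲,z) + G(η) φ(η,z), and c_0 z ∂_ζ φ(η,z) + ∂_η φ(η,z) = 2 H(η) P̂_r(z; n, t) φ(η̄,z) - Q̂_r(z; n, t) φ(η,z). Then ψ(n,t) := φ(η(n,t), ζ(t)) satisfies λ ψ(n,t) = u(n,t) ψ(n+1,t) + u(n-1,t) ψ(n-1,t) + v(n,t) ψ(n,t) and ∂_t ψ(n,t) = 2 u(n,t) P_r(λ; n, t) ψ(n+1,t) - Q_r(λ; n, t) ψ(n,t), for all n ∈ ℤ, t ∈ I. -/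

import Mathlib

mutual
/-- `p`-sequence of the Toda-hierarchy recursion generated from `(u, v)`:
`p₀ = 1`, `p_{r+1}(n,t) = (1/2)(q_r(n,t) + q_r(n-1,t)) + v(n,t) p_r(n,t)`. -/
noncomputable def todaP (u v : ℤ × ℝ → ℝ) : ℕ → ℤ × ℝ → ℝ
  | 0, _ => 1
  | (r+1), (n, t) =>
      (1/2) * (todaQ u v r (n, t) + todaQ u v r (n-1, t)) + v (n, t) * todaP u v r (n, t)
termination_by r _ => r

/-- `q`-sequence of the Toda-hierarchy recursion generated from `(u, v)`:
`q₀ = 0`,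
`q_{r+1}(n,t) = 2 u(n,t)² Σ_{l=0}^{r} p_{r-l}(n,t) p_l(n+1,t) - (1/2) Σ_{l=0}^{r} q_{r-l}(n,t) q_l(n,t)`. -/
noncomputable def todaQ (u v : ℤ × ℝ → ℝ) : ℕ → ℤ × ℝ → ℝ
  | 0, _ => 0
  | (r+1), (n, t) =>
      2 * (u (n, t))^2 * ∑ l ∈ (Finset.range (r+1)).attach,
          todaP u v (r - l.1) (n, t) * todaP u v l.1 (n+1, t)
      - (1/2) * ∑ l ∈ (Finset.range (r+1)).attach,
          todaQ u v (r - l.1) (n, t) * todaQ u v l.1 (n, t)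
termination_by r _ => r
decreasing_by
  all_goals (try (have hl := l.2; simp only [Finset.mem_range] at hl)); omega
end

/-- The `r`-th flow `TL_r` of the Toda hierarchy, at lattice site `n` and time `t`:
`∂ₜ u(n,t) = u(n,t)(p_{r+1}(n+1,t) - p_{r+1}(n,t))`,
`∂ₜ v(n,t) = q_{r+1}(n,t) - q_{r+1}(n-1,t)`. -/
def TodaFlow (u v : ℤ × ℝ → ℝ) (r : ℕ) (n : ℤ) (t : ℝ) : Prop :=
  HasDerivAt (fun s => u (n, s))
    (u (n, t) * (todaP u v (r+1) (n+1, t) - todaP u v (r+1) (n, t))) t ∧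
  HasDerivAt (fun s => v (n, s))
    (todaQ u v (r+1) (n, t) - todaQ u v (r+1) (n-1, t)) t

/-- The Lax-pair polynomial `P_r(λ; n, t) = Σ_{j=0}^{r} λ^j p_{r-j}(n,t)` of the Toda
hierarchy. -/
noncomputable def todaLaxP (u v : ℤ × ℝ → ℝ) (r : ℕ) (lam : ℝ) (n : ℤ) (t : ℝ) : ℝ :=
  ∑ j ∈ Finset.range (r+1), lam^j * todaP u v (r-j) (n, t)

/-- The Lax-pair polynomial
`Q_r(λ; n, t) = λ^{r+1} + Σ_{j=0}^{r} λ^j q_{r-j}(n,t) - p_{r+1}(n,t)` of the Toda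
hierarchy. -/
noncomputable def todaLaxQ (u v : ℤ × ℝ → ℝ) (r : ℕ) (lam : ℝ) (n : ℤ) (t : ℝ) : ℝ :=
  lam^(r+1) + ∑ j ∈ Finset.range (r+1), lam^j * todaQ u v (r-j) (n, t)
    - todaP u v (r+1) (n, t)

/-! The Toda recursion is homogeneous: scaling `(u, v)` by `s` scales `p_j` by `s ^ j` and `q_j`
by `s ^ (j + 1)`. With `s = σ' ^ (1 / (r + 1))` we have `(u, v) = s • (Ĥ, Ĝ)` and `λ = s ζ`, so
`P_r(λ) = s ^ r P̂_r(ζ)` and `Q_r(λ) = s ^ (r + 1) Q̂_r(ζ)`. The ODE `σ'' = -(r + 1) c₀ σ' ^ 2`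
is exactly what makes `ζ' = c₀ σ' ζ`, so by the chain rule
`∂ₜ ψ = σ' (∂_η φ + c₀ ζ ∂_ζ φ)`, which is `s ^ (r + 1)` times the reduced time equation;
the spectral equation is `s` times the reduced one. -/

section Scaling

variable {u v U V : ℤ × ℝ → ℝ} {t s : ℝ}

theorem todaP_todaQ_of_scale (hu : ∀ n, u (n, t) = s * U (n, t))
    (hv : ∀ n, v (n, t) = s * V (n, t)) (j : ℕ) (n : ℤ) :
    todaP u v j (n, t) = s ^ j * todaP U V j (n, t) ∧
      todaQ u v j (n, t) = s ^ (j + 1) * todaQ U V j (n, t) := by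
  induction j using Nat.strong_induction_on generalizing n with
  | _ j ih =>
    match j with
    | 0 => simp [todaP, todaQ]
    | r + 1 =>
      have hP : ∀ l ∈ (Finset.range (r + 1)).attach,
          todaP u v (r - l.1) (n, t) * todaP u v l.1 (n + 1, t)
            = s ^ r * (todaP U V (r - l.1) (n, t) * todaP U V l.1 (n + 1, t)) := by
        intro l _
        have hl : l.1 ≤ r := Nat.lt_succ_iff.mp (Finset.mem_range.mp l.2)
        rw [(ih _ (by omega) n).1, (ih _ (by omega) (n + 1)).1, ← pow_sub_mul_pow s hl]
        ring
      have hQ : ∀ l ∈ (Finset.range (r + 1)).attach,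
          todaQ u v (r - l.1) (n, t) * todaQ u v l.1 (n, t)
            = s ^ (r + 2) * (todaQ U V (r - l.1) (n, t) * todaQ U V l.1 (n, t)) := by
        intro l _
        have hl : l.1 ≤ r := Nat.lt_succ_iff.mp (Finset.mem_range.mp l.2)
        rw [(ih _ (by omega) n).2, (ih _ (by omega) n).2,
          show r + 2 = (r - l.1 + 1) + (l.1 + 1) by omega, pow_add]
        ring
      constructor
      · rw [todaP, todaP, (ih r (by omega) n).2, (ih r (by omega) (n - 1)).2,
          (ih r (by omega) n).1, hv]
        ring
      · rw [todaQ, todaQ, Finset.sum_congr rfl hP, Finset.sum_congr rfl hQ, ← Finset.mul_sum,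
          ← Finset.mul_sum, hu]
        ring

theorem todaLaxP_of_scale (hu : ∀ n, u (n, t) = s * U (n, t))
    (hv : ∀ n, v (n, t) = s * V (n, t)) (r : ℕ) (z : ℝ) (n : ℤ) :
    todaLaxP u v r (s * z) n t = s ^ r * todaLaxP U V r z n t := by
  rw [todaLaxP, todaLaxP, Finset.mul_sum]
  refine Finset.sum_congr rfl fun j hj => ?_
  have hj : j ≤ r := Nat.lt_succ_iff.mp (Finset.mem_range.mp hj)
  rw [(todaP_todaQ_of_scale hu hv _ n).1, ← pow_sub_mul_pow s hj]
  ring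

theorem todaLaxQ_of_scale (hu : ∀ n, u (n, t) = s * U (n, t))
    (hv : ∀ n, v (n, t) = s * V (n, t)) (r : ℕ) (z : ℝ) (n : ℤ) :
    todaLaxQ u v r (s * z) n t = s ^ (r + 1) * todaLaxQ U V r z n t := by
  have hQ : ∀ j ∈ Finset.range (r + 1), (s * z) ^ j * todaQ u v (r - j) (n, t)
      = s ^ (r + 1) * (z ^ j * todaQ U V (r - j) (n, t)) := by
    intro j hj
    have hj : j ≤ r := Nat.lt_succ_iff.mp (Finset.mem_range.mp hj)
    rw [(todaP_todaQ_of_scale hu hv _ n).2, show r + 1 = (r - j + 1) + j by omega, pow_add]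
    ring
  rw [todaLaxQ, todaLaxQ, Finset.sum_congr rfl hQ, ← Finset.mul_sum,
    (todaP_todaQ_of_scale hu hv _ n).1]
  ring

end Scaling

theorem hasDerivAt_const_div_rpow_inv {f : ℝ → ℝ} {f' k c t : ℝ} (lam : ℝ)
    (hf : HasDerivAt f f' t) (hpos : 0 < f t) (hk : k ≠ 0) (hode : f' = -k * c * f t ^ 2) :
    HasDerivAt (fun w => lam / f w ^ k⁻¹) (c * f t * (lam / f t ^ k⁻¹)) t := by
  have hroot : 0 < f t ^ k⁻¹ := Real.rpow_pos_of_pos hpos _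
  refine ((hasDerivAt_const t lam).div (hf.rpow_const (Or.inl hpos.ne')) hroot.ne').congr_deriv ?_
  rw [hode, Real.rpow_sub_one hpos.ne']
  field_simp
  ring

theorem HasFDerivAt.comp_hasDerivAt_prodMk {x y : ℝ → ℝ} {F : ℝ × ℝ → ℝ} {a b x' y' t : ℝ}
    (hF : HasFDerivAt F (a • ContinuousLinearMap.fst ℝ ℝ ℝ + b • ContinuousLinearMap.snd ℝ ℝ ℝ)
      (x t, y t))
    (hx : HasDerivAt x x' t) (hy : HasDerivAt y y' t) :
    HasDerivAt (fun w => F (x w, y w)) (a * x' + b * y') t := by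
  have hcomp := hF.comp_hasDerivAt t (hx.prodMk hy)
  simp only [add_apply, smul_apply, smul_eq_mul,
    ContinuousLinearMap.coe_fst', ContinuousLinearMap.coe_snd'] at hcomp
  exact hcomp

/-- Reduction of the general Lax pair of the Toda hierarchy: if
`φ(η, ζ)` solves the reduced `r`-th flow Lax pair built from the Toda-hierarchy
recursion applied to `Ĥ(n,t) = H(η(n,t))`, `Ĝ(n,t) = G(η(n,t))`, along the reduction
`η(n,t) = ν(n) + σ(t)`, `ζ(t) = λ/σ'(t)^(1/(r+1))`, then `ψ(n,t) = φ(η(n,t), ζ(t))`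
solves the Lax pair of the `r`-th flow of the Toda hierarchy with
`u = σ'^(1/(r+1)) H(η)`, `v = σ'^(1/(r+1)) G(η)`. -/
theorem lax_reduction_general_flow
    (r : ℕ) (hr : 1 ≤ r)
    (c₀ a b lam : ℝ) (σ σ' σ'' : ℝ → ℝ)
    (hσ : ∀ t ∈ Set.Ioo a b, HasDerivAt σ (σ' t) t)
    (hσ' : ∀ t ∈ Set.Ioo a b, HasDerivAt σ' (σ'' t) t)
    (hσpos : ∀ t ∈ Set.Ioo a b, 0 < σ' t)
    (hode : ∀ t ∈ Set.Ioo a b, σ'' t = -((r : ℝ) + 1) * c₀ * (σ' t)^2)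
    (ν : ℤ → ℝ) (η : ℤ → ℝ → ℝ) (hη : ∀ (n : ℤ) (t : ℝ), η n t = ν n + σ t)
    (H G : ℝ → ℝ)
    (Hhat Ghat : ℤ × ℝ → ℝ)
    (hHhat : ∀ (n : ℤ) (t : ℝ), Hhat (n, t) = H (η n t))
    (hGhat : ∀ (n : ℤ) (t : ℝ), Ghat (n, t) = G (η n t))
    (ζ : ℝ → ℝ) (hζ : ∀ t : ℝ, ζ t = lam / (σ' t) ^ (((r : ℝ) + 1)⁻¹))
    (u v : ℤ × ℝ → ℝ)
    (hu : ∀ (n : ℤ) (t : ℝ), u (n, t) = (σ' t) ^ (((r : ℝ) + 1)⁻¹) * H (η n t))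
    (hv : ∀ (n : ℤ) (t : ℝ), v (n, t) = (σ' t) ^ (((r : ℝ) + 1)⁻¹) * G (η n t))
    (φ φη φζ : ℝ × ℝ → ℝ)
    (hφ : ∀ p : ℝ × ℝ, HasFDerivAt φ
      (φη p • ContinuousLinearMap.fst ℝ ℝ ℝ + φζ p • ContinuousLinearMap.snd ℝ ℝ ℝ) p)
    (hlax₁ : ∀ (n : ℤ), ∀ t ∈ Set.Ioo a b,
      ζ t * φ (η n t, ζ t) =
        H (η n t) * φ (η (n+1) t, ζ t) + H (η (n-1) t) * φ (η (n-1) t, ζ t)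
          + G (η n t) * φ (η n t, ζ t))
    (hlax₂ : ∀ (n : ℤ), ∀ t ∈ Set.Ioo a b,
      c₀ * ζ t * φζ (η n t, ζ t) + φη (η n t, ζ t) =
        2 * H (η n t) * todaLaxP Hhat Ghat r (ζ t) n t * φ (η (n+1) t, ζ t)
          - todaLaxQ Hhat Ghat r (ζ t) n t * φ (η n t, ζ t))
    (ψ : ℤ → ℝ → ℝ) (hψ : ∀ (n : ℤ) (t : ℝ), ψ n t = φ (η n t, ζ t)) :
    ∀ (n : ℤ), ∀ t ∈ Set.Ioo a b,
      lam * ψ n t = u (n, t) * ψ (n+1) t + u (n-1, t) * ψ (n-1) t + v (n, t) * ψ n t ∧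
      HasDerivAt (fun s => ψ n s)
        (2 * u (n, t) * todaLaxP u v r lam n t * ψ (n+1) t
          - todaLaxQ u v r lam n t * ψ n t) t := by
  intro n t ht
  set s := σ' t ^ ((r : ℝ) + 1)⁻¹ with hs
  have hs_pos : 0 < s := Real.rpow_pos_of_pos (hσpos t ht) _
  have hs_pow : s ^ (r + 1) = σ' t := by
    simpa using Real.rpow_inv_natCast_pow (hσpos t ht).le (n := r + 1) (by omega)
  have hu_scale : ∀ m, u (m, t) = s * Hhat (m, t) := fun m => by rw [hu, hHhat]
  have hv_scale : ∀ m, v (m, t) = s * Ghat (m, t) := fun m => by rw [hv, hGhat]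
  have hlam : lam = s * ζ t := by rw [hζ, ← hs]; field_simp
  have hζ_deriv : HasDerivAt ζ (c₀ * σ' t * ζ t) t := by
    rw [funext hζ]
    exact hasDerivAt_const_div_rpow_inv lam (hσ' t ht) (hσpos t ht) (by positivity) (hode t ht)
  have hη_deriv : HasDerivAt (η n) (σ' t) t := by
    rw [funext (hη n)]
    exact (hσ t ht).const_add _
  refine ⟨?_, ?_⟩
  · simp only [hψ, hu, hv, hlam]
    linear_combination s * hlax₁ n t ht
  · have hψ_deriv : HasDerivAt (ψ n)
        (φη (η n t, ζ t) * σ' t + φζ (η n t, ζ t) * (c₀ * σ' t * ζ t)) t := by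
      rw [funext (hψ n)]
      exact (hφ _).comp_hasDerivAt_prodMk hη_deriv hζ_deriv
    refine hψ_deriv.congr_deriv ?_
    rw [hlam, todaLaxP_of_scale hu_scale hv_scale, todaLaxQ_of_scale hu_scale hv_scale, hψ, hψ,
      hu_scale, hHhat, ← hs_pow]
    linear_combination s ^ (r + 1) * hlax₂ n t ht
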